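/- Let (V, d) be a metric, S a finite server set, and let O_{ik} ⊆ S, P_{ik} ⊆ S be subsets of size ik with dist(P_{ik}, O_{ik}) = η_{ik}, and similarly at index (i−1)k. Let R̂ be the requests of rounds (i−1)k+1, …, ik−1 with algorithm-matched servers Ŝ satisfying dist(Ŝ, R̂) ≤ γ·cost(ÔPT), and cost(ÔPT) ≤ Σ_{j=1}^{k} d(o_{(i−1)k+j}, r_{(i−1)k+j}) + η_{(i−1)k}. Then dist(P_{ik}, P_{ik−1} ∪ {r_{ik}}) ≤ (1+γ)·Σ_{j=1}^{k} d(o_{(i−1)k+j}, r_{(i−1)k+j}) + (1+γ)·η_{(i−1)k} + η_{ik}, where P_{ik−1} = P_{(i−1)k} ∪ Ŝ. -/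

import Mathlib

/-!
Two triangle inequalities, through `Oik` and through `Oprev + R` with `R = {r_1, …, r_k}`, split
the cost into `dist(Pik, Oik) = η_i`, then `dist(Oik, Oprev + R) ≤ Σ_j d(o_j, r_j)` (match each
`o_j` with `r_j`), and `dist(Oprev + R, r_k + Pprev + Ŝ)`. Cancelling `r_k` and matching `Oprev`
with `Pprev` and `R̂` with `Ŝ` bounds the last term by `η_{i−1} + γ·cost(ÔPT)`, and the bound on
`cost(ÔPT)` finishes. The triangle inequality for matching distances holds because the middle
multiset can be listed in the order of either matching, so the second matching can be permuted
and composed with the first.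
-/

/-- The minimum cost of a perfect matching between two equal-size multisets
in a metric space. -/
noncomputable def mdist {V : Type*} [MetricSpace V] (A B : Multiset V) : ℝ :=
  sInf {c : ℝ | ∃ l₁ l₂ : List V, (l₁ : Multiset V) = A ∧ (l₂ : Multiset V) = B ∧
    c = (List.zipWith dist l₁ l₂).sum}

open scoped Pointwise

theorem List.Perm.exists_perm_map_eq {α β : Type*} {f : α → β} {m : List β} {l : List α}
    (h : m.Perm (l.map f)) : ∃ l' : List α, l'.Perm l ∧ l'.map f = m := by
  induction m generalizing l with
  | nil => exact ⟨[], by simpa using h.symm, rfl⟩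
  | cons b m ih =>
    obtain ⟨a, ha, rfl⟩ := List.mem_map.mp (h.subset List.mem_cons_self)
    obtain ⟨s, t, rfl⟩ := List.append_of_mem ha
    have hm : m.Perm ((s ++ t).map f) := by
      refine (h.trans ?_).cons_inv
      simpa only [List.map_append, List.map_cons] using List.perm_middle
    obtain ⟨l', hl', rfl⟩ := ih hm
    exact ⟨a :: l', (hl'.cons a).trans List.perm_middle.symm, rfl⟩

theorem List.Perm.exists_perm_sum_zipWith_eq {α β M : Type*} [AddCommMonoid M]
    (f : α → β → M) {l₁ l₁' : List α} {l₂ : List β} (h : l₁.Perm l₁')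
    (hl : l₁'.length = l₂.length) :
    ∃ l₂', l₂'.Perm l₂ ∧ (List.zipWith f l₁ l₂').sum = (List.zipWith f l₁' l₂).sum := by
  obtain ⟨p, hp, hfst⟩ :=
    List.Perm.exists_perm_map_eq (m := l₁) (l := l₁'.zip l₂)
      (by rw [List.map_fst_zip hl.le]; exact h)
  refine ⟨p.map Prod.snd, ?_, ?_⟩
  · simpa only [List.map_snd_zip hl.ge] using hp.map Prod.snd
  · rw [← hfst, List.zipWith_map, List.zipWith_self, ← List.map_uncurry_zip_eq_zipWith]
    exact (hp.map _).sum_eq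

section Matching

variable {V : Type*} [MetricSpace V]

theorem sum_zipWith_dist_nonneg (l₁ l₂ : List V) : 0 ≤ (List.zipWith dist l₁ l₂).sum := by
  rw [← List.map_uncurry_zip_eq_zipWith]
  refine List.sum_nonneg fun x hx => ?_
  obtain ⟨_, -, rfl⟩ := List.mem_map.mp hx
  exact dist_nonneg

theorem sum_zipWith_dist_le {l₁ l₂ l₃ : List V} (h₁₂ : l₁.length = l₂.length)
    (h₂₃ : l₂.length = l₃.length) :
    (List.zipWith dist l₁ l₃).sum ≤
      (List.zipWith dist l₁ l₂).sum + (List.zipWith dist l₂ l₃).sum := by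
  induction l₁ generalizing l₂ l₃ with
  | nil => simpa using sum_zipWith_dist_nonneg l₂ l₃
  | cons a l₁ ih =>
    obtain _ | ⟨b, l₂⟩ := l₂; · simp at h₁₂
    obtain _ | ⟨c, l₃⟩ := l₃; · simp at h₂₃
    simp only [List.zipWith_cons_cons, List.sum_cons]
    linarith [ih (l₂ := l₂) (l₃ := l₃) (by simpa using h₁₂) (by simpa using h₂₃),
      dist_triangle a b c]

def matchingCosts (A B : Multiset V) : Set ℝ :=
  {c : ℝ | ∃ l₁ l₂ : List V, (l₁ : Multiset V) = A ∧ (l₂ : Multiset V) = B ∧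
    c = (List.zipWith dist l₁ l₂).sum}

theorem mdist_eq_sInf_matchingCosts (A B : Multiset V) :
    mdist A B = sInf (matchingCosts A B) := rfl

theorem matchingCosts_nonempty (A B : Multiset V) : (matchingCosts A B).Nonempty :=
  ⟨_, A.toList, B.toList, A.coe_toList, B.coe_toList, rfl⟩

theorem matchingCosts_bddBelow (A B : Multiset V) : BddBelow (matchingCosts A B) :=
  ⟨0, by rintro _ ⟨l₁, l₂, -, -, rfl⟩; exact sum_zipWith_dist_nonneg l₁ l₂⟩

theorem mdist_le_sum_zipWith {A B : Multiset V} {l₁ l₂ : List V}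
    (h₁ : (l₁ : Multiset V) = A) (h₂ : (l₂ : Multiset V) = B) :
    mdist A B ≤ (List.zipWith dist l₁ l₂).sum :=
  csInf_le (matchingCosts_bddBelow A B) ⟨l₁, l₂, h₁, h₂, rfl⟩

theorem mdist_comm (A B : Multiset V) : mdist A B = mdist B A := by
  suffices ∀ A B : Multiset V, matchingCosts A B ⊆ matchingCosts B A by
    simp only [mdist_eq_sInf_matchingCosts, (this A B).antisymm (this B A)]
  rintro A B _ ⟨l₁, l₂, h₁, h₂, rfl⟩
  exact ⟨l₂, l₁, h₂, h₁, by rw [List.zipWith_comm_of_comm dist_comm]⟩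

theorem mdist_triangle {A B C : Multiset V} (hAB : Multiset.card A = Multiset.card B)
    (hBC : Multiset.card B = Multiset.card C) :
    mdist A C ≤ mdist A B + mdist B C := by
  simp only [mdist_eq_sInf_matchingCosts]
  rw [← csInf_add (matchingCosts_nonempty A B) (matchingCosts_bddBelow A B)
    (matchingCosts_nonempty B C) (matchingCosts_bddBelow B C)]
  refine le_csInf ((matchingCosts_nonempty A B).add (matchingCosts_nonempty B C)) ?_
  rintro _ ⟨_, ⟨l₁, l₂, rfl, rfl, rfl⟩, _, ⟨l₂', l₃, hl₂', rfl, rfl⟩, rfl⟩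
  have hperm : l₂.Perm l₂' := Multiset.coe_eq_coe.mp hl₂'.symm
  have hlen₂₃ : l₂'.length = l₃.length := by simpa [← hl₂'] using hBC
  obtain ⟨l₃', hl₃', hsum⟩ := hperm.exists_perm_sum_zipWith_eq dist hlen₂₃
  rw [← hsum]
  refine (csInf_le (matchingCosts_bddBelow _ _)
    ⟨l₁, l₃', rfl, Multiset.coe_eq_coe.mpr hl₃', rfl⟩).trans ?_
  exact sum_zipWith_dist_le (by simpa using hAB)
    (by rw [hl₃'.length_eq, ← hlen₂₃, hperm.length_eq])

theorem mdist_add_left_le (C A B : Multiset V) : mdist (C + A) (C + B) ≤ mdist A B := by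
  refine le_csInf (matchingCosts_nonempty A B) ?_
  rintro _ ⟨l₁, l₂, rfl, rfl, rfl⟩
  calc mdist (C + (l₁ : Multiset V)) (C + (l₂ : Multiset V))
      ≤ (List.zipWith dist (C.toList ++ l₁) (C.toList ++ l₂)).sum :=
        mdist_le_sum_zipWith (by rw [← Multiset.coe_add, Multiset.coe_toList])
          (by rw [← Multiset.coe_add, Multiset.coe_toList])
    _ = (List.zipWith dist l₁ l₂).sum := by
        simp [List.zipWith_append, List.zipWith_self]

theorem mdist_cons_cons_le (x : V) (A B : Multiset V) :
    mdist (x ::ₘ A) (x ::ₘ B) ≤ mdist A B := by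
  simpa only [Multiset.singleton_add] using mdist_add_left_le {x} A B

theorem mdist_add_add_le {A B C D : Multiset V} (hAB : Multiset.card A = Multiset.card B)
    (hCD : Multiset.card C = Multiset.card D) :
    mdist (A + C) (B + D) ≤ mdist A B + mdist C D := by
  calc mdist (A + C) (B + D) ≤ mdist (A + C) (B + C) + mdist (B + C) (B + D) :=
        mdist_triangle (by simp [hAB]) (by simp [hCD])
    _ ≤ mdist A B + mdist C D := by
        have hA : mdist (A + C) (B + C) ≤ mdist A B := by
          rw [add_comm A, add_comm B]
          exact mdist_add_left_le C A B
        exact add_le_add hA (mdist_add_left_le B C D)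

theorem mdist_map_le {ι : Type*} (s : Multiset ι) (f g : ι → V) :
    mdist (s.map f) (s.map g) ≤ (s.map fun i => dist (f i) (g i)).sum := by
  calc mdist (s.map f) (s.map g) ≤ (List.zipWith dist (s.toList.map f) (s.toList.map g)).sum :=
        mdist_le_sum_zipWith (by rw [← Multiset.map_coe, Multiset.coe_toList])
          (by rw [← Multiset.map_coe, Multiset.coe_toList])
    _ = _ := by
        rw [List.zipWith_map, List.zipWith_self]
        conv_rhs => rw [← Multiset.coe_toList s, Multiset.map_coe, Multiset.sum_coe]

end Matching

theorem Finset.Icc_one_val_eq_cons {k : ℕ} (hk : 1 ≤ k) :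
    (Finset.Icc 1 k).val = k ::ₘ (Finset.Icc 1 (k - 1)).val := by
  rw [← Finset.insert_val_of_notMem (by simp only [Finset.mem_Icc]; omega),
    Finset.insert_Icc_sub_one_right_eq_Icc hk]

theorem stmt19_general {V : Type*} [MetricSpace V] (k : ℕ) (hk : 1 ≤ k)
    (γ : ℝ) (hγ : 1 ≤ γ)
    (Pik Pik1 Pprev Oik Oprev Shat : Multiset V)
    (o r : ℕ → V) (ηi ηprev optA : ℝ)
    (hO : Oik = Oprev + (Finset.Icc 1 k).val.map o)
    (hcard1 : Multiset.card Pik = Multiset.card Oik)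
    (hcard2 : Multiset.card Pprev = Multiset.card Oprev)
    (hcard3 : Multiset.card Shat = k - 1)
    (hη1 : mdist Pik Oik = ηi)
    (hη0 : mdist Pprev Oprev = ηprev)
    (hadh : mdist Shat ((Finset.Icc 1 (k - 1)).val.map r) ≤ γ * optA)
    (hopt : optA ≤ (∑ j ∈ Finset.Icc 1 k, dist (o j) (r j)) + ηprev)
    (hP : Pik1 = Pprev + Shat) :
    mdist Pik (r k ::ₘ Pik1) ≤
      (1 + γ) * (∑ j ∈ Finset.Icc 1 k, dist (o j) (r j))
        + (1 + γ) * ηprev + ηi := by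
  set R := (Finset.Icc 1 k).val.map r
  set Rhat := (Finset.Icc 1 (k - 1)).val.map r
  have hR : R = r k ::ₘ Rhat := by
    simp only [R, Rhat, Finset.Icc_one_val_eq_cons hk, Multiset.map_cons]
  have hcardO : Multiset.card Oik = Multiset.card (Oprev + R) := by simp [hO, R]
  have hcardR : Multiset.card (Oprev + R) = Multiset.card (r k ::ₘ Pik1) := by
    simp [hR, hP, hcard2, hcard3, Rhat]
  have hOR : mdist Oik (Oprev + R) ≤ ∑ j ∈ Finset.Icc 1 k, dist (o j) (r j) := by
    rw [hO]
    exact (mdist_add_left_le _ _ _).trans (mdist_map_le _ o r)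
  have hRP : mdist (Oprev + R) (r k ::ₘ Pik1) ≤ ηprev + γ * optA := by
    rw [hR, Multiset.add_cons, hP]
    calc mdist (r k ::ₘ (Oprev + Rhat)) (r k ::ₘ (Pprev + Shat))
        ≤ mdist (Oprev + Rhat) (Pprev + Shat) := mdist_cons_cons_le _ _ _
      _ ≤ mdist Oprev Pprev + mdist Rhat Shat :=
          mdist_add_add_le hcard2.symm (by simp [hcard3, Rhat])
      _ ≤ ηprev + γ * optA := by rw [mdist_comm, hη0, mdist_comm]; gcongr
  have hγopt := mul_le_mul_of_nonneg_left hopt (by linarith : 0 ≤ γ)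
  linarith [mdist_triangle hcard1 (hcardO.trans hcardR), mdist_triangle hcardO hcardR]

/-- Query-round bound of the parsimonious Follow-the-Prediction analysis.
`o j` (resp. `r j`) is the offline server (resp. request) of round `(i−1)k + j`
for `j = 1, …, k`; `Oik = Oprev ∪ {o_1, …, o_k}`; the prediction errors are
`dist(Pik, Oik) = η_i` and `dist(Pprev, Oprev) = η_{i−1}`; the subroutine's
servers `Ŝ` for the requests `R̂ = {r_1, …, r_{k−1}}` satisfy
`dist(Ŝ, R̂) ≤ γ·cost(ÔPT)` with
`cost(ÔPT) ≤ Σ_{j=1}^{k} d(o_j, r_j) + η_{i−1}`; and `P_{ik−1} = Pprev ∪ Ŝ`.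
Then `dist(Pik, P_{ik−1} ∪ {r_k}) ≤
(1+γ)·Σ_{j=1}^{k} d(o_j, r_j) + (1+γ)·η_{i−1} + η_i`. -/
theorem stmt19 {V : Type*} [MetricSpace V] (k : ℕ) (hk : 1 ≤ k)
    (γ : ℝ) (hγ : 1 ≤ γ)
    (Pik Pik1 Pprev Oik Oprev Shat : Multiset V)
    (o r : ℕ → V) (ηi ηprev optA : ℝ)
    (hO : Oik = Oprev + (Finset.Icc 1 k).val.map o)
    (hcard1 : Multiset.card Pik = Multiset.card Oik)
    (hcard2 : Multiset.card Pprev = Multiset.card Oprev)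
    (hcard3 : Multiset.card Shat = k - 1)
    (hη1 : mdist Pik Oik = ηi)
    (hη0 : mdist Pprev Oprev = ηprev)
    (hoptnn : 0 ≤ optA)
    (hadh : mdist Shat ((Finset.Icc 1 (k - 1)).val.map r) ≤ γ * optA)
    (hopt : optA ≤ (∑ j ∈ Finset.Icc 1 k, dist (o j) (r j)) + ηprev)
    (hP : Pik1 = Pprev + Shat) :
    mdist Pik (r k ::ₘ Pik1) ≤
      (1 + γ) * (∑ j ∈ Finset.Icc 1 k, dist (o j) (r j))
        + (1 + γ) * ηprev + ηi :=
  stmt19_general k hk γ hγ Pik Pik1 Pprev Oik Oprev Shat o r ηi ηprev optA hO hcard1 hcard2 hcard3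
    hη1 hη0 hadh hopt hP
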